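/- There exists a C² function G : (0,∞) → [0,∞), non-increasing, such that G'' ≥ (G')² and G' ≤ 0 on (0,∞), G is supported in (0,1], G(t) ~ -ln t as t → 0⁺, and -G'(t) ≤ 1/t for all t ∈ (0, 1/4]. -/

import Mathlib

/-!
Take `G = -log f` for the profile `f t = 1 - ((1 - t)⁺)³`, which is `C²`, nondecreasing and
concave, equal to `1` on `[1, ∞)` and to `t (t² - 3t + 3)` on `(-∞, 1]`. Then `G' = -f'/f ≤ 0` and
`G'' - G'² = -f''/f ≥ 0`, while on `(0, 1)` we have `G t = -log t - log (t² - 3t + 3)`, whose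
second term stays bounded.
-/

open Set Filter Topology Real

noncomputable section

theorem hasDerivAt_posPart_pow (n : ℕ) (x : ℝ) :
    HasDerivAt (fun y : ℝ => y⁺ ^ (n + 2)) ((n + 2) * x⁺ ^ (n + 1)) x := by
  have hright : ∀ x : ℝ, 0 ≤ x →
      HasDerivWithinAt (fun y : ℝ => y⁺ ^ (n + 2)) ((n + 2) * x⁺ ^ (n + 1)) (Ici 0) x := by
    intro x hx
    rw [posPart_eq_self.2 hx]
    refine ((hasDerivAt_pow (n + 2) x).hasDerivWithinAt.congr
      (fun y hy => by simp [posPart_eq_self.2 (mem_Ici.1 hy)]) (by simp [posPart_eq_self.2 hx]))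
      |>.congr_deriv ?_
    push_cast
    ring_nf
  have hleft : ∀ x : ℝ, x ≤ 0 →
      HasDerivWithinAt (fun y : ℝ => y⁺ ^ (n + 2)) ((n + 2) * x⁺ ^ (n + 1)) (Iic 0) x := by
    intro x hx
    rw [posPart_eq_zero.2 hx, zero_pow n.succ_ne_zero, mul_zero]
    exact (hasDerivWithinAt_const x _ 0).congr
      (fun y hy => by simp [posPart_eq_zero.2 (mem_Iic.1 hy)]) (by simp [posPart_eq_zero.2 hx])
  rcases lt_trichotomy x 0 with hx | rfl | hx
  · exact (hleft x hx.le).hasDerivAt (Iic_mem_nhds hx)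
  · simpa using (hleft 0 le_rfl).union (hright 0 le_rfl)
  · exact (hright x hx.le).hasDerivAt (Ici_mem_nhds hx)

theorem hasDerivAt_posPart_one_sub_pow (n : ℕ) (x : ℝ) :
    HasDerivAt (fun y : ℝ => (1 - y)⁺ ^ (n + 2)) (-((n + 2) * (1 - x)⁺ ^ (n + 1))) x := by
  simpa [Function.comp_def] using
    (hasDerivAt_posPart_pow n (1 - x)).comp x ((hasDerivAt_id x).const_sub 1)

theorem contDiff_two_of_hasDerivAt {f f' f'' : ℝ → ℝ} (hf : ∀ x, HasDerivAt f (f' x) x)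
    (hf' : ∀ x, HasDerivAt f' (f'' x) x) (hf'' : Continuous f'') : ContDiff ℝ 2 f := by
  have hd : deriv f = f' := funext fun x => (hf x).deriv
  have hd' : deriv f' = f'' := funext fun x => (hf' x).deriv
  rw [show (2 : WithTop ℕ∞) = 1 + 1 from rfl, contDiff_succ_iff_deriv, hd, contDiff_one_iff_deriv,
    hd']
  exact ⟨fun x => (hf x).differentiableAt, by simp, fun x => (hf' x).differentiableAt, hf''⟩

theorem sq_deriv_neg_log_le_deriv_deriv {f f' : ℝ → ℝ} {s : Set ℝ} {t f'' : ℝ} (hs : IsOpen s)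
    (hf : ∀ x ∈ s, HasDerivAt f (f' x) x) (hpos : ∀ x ∈ s, 0 < f x) (ht : t ∈ s)
    (hf' : HasDerivAt f' f'' t) (hconcave : f'' ≤ 0) :
    deriv (fun x => -log (f x)) t ^ 2 ≤ deriv (deriv fun x => -log (f x)) t := by
  have hG : deriv (fun x => -log (f x)) =ᶠ[𝓝 t] fun x => -(f' x / f x) :=
    eventually_of_mem (hs.mem_nhds ht) fun x hx => ((hf x hx).log (hpos x hx).ne').neg.deriv
  have hft := hpos t ht
  have hG' : HasDerivAt (fun x => -(f' x / f x)) (-((f'' * f t - f' t * f' t) / f t ^ 2)) t :=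
    (hf'.div (hf t ht) hft.ne').neg
  rw [hG.eq_of_nhds, hG.deriv_eq, hG'.deriv]
  calc (-(f' t / f t)) ^ 2 = (f' t / f t) ^ 2 := neg_sq _
    _ ≤ (f' t / f t) ^ 2 + -f'' / f t :=
      le_add_of_nonneg_right (div_nonneg (neg_nonneg.2 hconcave) hft.le)
    _ = -((f'' * f t - f' t * f' t) / f t ^ 2) := by field_simp; ring

theorem Filter.Tendsto.add_div_self_of_tendsto_atTop {α : Type*} {l : Filter α} {u g : α → ℝ}
    {c : ℝ} (hu : Tendsto u l atTop) (hg : Tendsto g l (𝓝 c)) :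
    Tendsto (fun x => (u x + g x) / u x) l (𝓝 1) := by
  have hlim : Tendsto (fun x => 1 + g x * (u x)⁻¹) l (𝓝 1) := by
    simpa using (hg.mul hu.inv_tendsto_atTop).const_add 1
  refine hlim.congr' ?_
  filter_upwards [hu.eventually_ne_atTop 0] with x hx
  field_simp

def cubicProfile (t : ℝ) : ℝ := 1 - (1 - t)⁺ ^ 3

theorem hasDerivAt_cubicProfile (t : ℝ) :
    HasDerivAt cubicProfile (3 * (1 - t)⁺ ^ 2) t := by
  refine ((hasDerivAt_posPart_one_sub_pow 1 t).const_sub 1).congr_deriv ?_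
  norm_num

theorem hasDerivAt_cubicProfile_deriv (t : ℝ) :
    HasDerivAt (fun t => 3 * (1 - t)⁺ ^ 2) (-(6 * (1 - t)⁺)) t := by
  refine ((hasDerivAt_posPart_one_sub_pow 0 t).const_mul 3).congr_deriv ?_
  ring

theorem contDiff_cubicProfile : ContDiff ℝ 2 cubicProfile :=
  contDiff_two_of_hasDerivAt hasDerivAt_cubicProfile hasDerivAt_cubicProfile_deriv (by fun_prop)

theorem cubicProfile_of_le_one {t : ℝ} (ht : t ≤ 1) : cubicProfile t = t * (t ^ 2 - 3 * t + 3) := by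
  rw [cubicProfile, posPart_eq_self.2 (sub_nonneg.2 ht)]
  ring

theorem cubicProfile_of_one_le {t : ℝ} (ht : 1 ≤ t) : cubicProfile t = 1 := by
  simp [cubicProfile, posPart_eq_zero.2 (sub_nonpos.2 ht)]

theorem cubicProfile_le_one (t : ℝ) : cubicProfile t ≤ 1 :=
  sub_le_self _ (pow_nonneg (posPart_nonneg _) 3)

theorem sq_sub_three_mul_add_three_pos (t : ℝ) : 0 < t ^ 2 - 3 * t + 3 := by
  nlinarith [sq_nonneg (t - 3 / 2)]

theorem cubicProfile_pos {t : ℝ} (ht : 0 < t) : 0 < cubicProfile t := by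
  rcases le_total t 1 with h | h
  · rw [cubicProfile_of_le_one h]
    exact mul_pos ht (sq_sub_three_mul_add_three_pos t)
  · rw [cubicProfile_of_one_le h]
    exact one_pos

theorem three_mul_sq_div_cubicProfile_le {t : ℝ} (ht : 0 < t) :
    3 * (1 - t)⁺ ^ 2 / cubicProfile t ≤ 1 / t := by
  rcases le_total t 1 with h | h
  · rw [cubicProfile_of_le_one h, posPart_eq_self.2 (sub_nonneg.2 h),
      div_le_div_iff₀ (mul_pos ht (sq_sub_three_mul_add_three_pos t)) ht]
    -- after clearing denominators this is `2 t² ≤ 3 t`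
    nlinarith
  · rw [posPart_eq_zero.2 (sub_nonpos.2 h)]
    simpa using ht.le

theorem tendsto_neg_log_cubicProfile_div_neg_log :
    Tendsto (fun t => -log (cubicProfile t) / -log t) (𝓝[>] 0) (𝓝 1) := by
  have hu : Tendsto (fun t => -log t) (𝓝[>] 0) atTop :=
    tendsto_neg_atBot_atTop.comp tendsto_log_nhdsGT_zero
  have hg : ContinuousAt (fun t => -log (t ^ 2 - 3 * t + 3)) 0 :=
    (ContinuousAt.log (f := fun t => t ^ 2 - 3 * t + 3) (by fun_prop)
      (sq_sub_three_mul_add_three_pos 0).ne').neg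
  refine (hu.add_div_self_of_tendsto_atTop (hg.tendsto.mono_left nhdsWithin_le_nhds)).congr' ?_
  filter_upwards [Ioo_mem_nhdsGT one_pos] with t ⟨ht0, ht1⟩
  rw [cubicProfile_of_le_one ht1.le, log_mul ht0.ne' (sq_sub_three_mul_add_three_pos t).ne',
    neg_add]

/-- There exists a C² function `G : (0,∞) → [0,∞)`, non-increasing, with
`G'' ≥ (G')²` and `G' ≤ 0` on `(0,∞)`, supported in `(0,1]`,
`G(t) ~ -ln t` as `t → 0⁺`, and `-G'(t) ≤ 1/t` for `t ∈ (0,1/4]`. -/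
theorem exists_log_like_convex_function :
    ∃ G : ℝ → ℝ,
      ContDiffOn ℝ 2 G (Ioi 0) ∧
      (∀ t ∈ Ioi (0 : ℝ), 0 ≤ G t) ∧
      AntitoneOn G (Ioi 0) ∧
      (∀ t ∈ Ioi (0 : ℝ), deriv G t ≤ 0) ∧
      (∀ t ∈ Ioi (0 : ℝ), (deriv G t) ^ 2 ≤ deriv (deriv G) t) ∧
      (∀ t : ℝ, 1 < t → G t = 0) ∧
      Tendsto (fun t => G t / (-Real.log t)) (nhdsWithin 0 (Ioi 0)) (nhds 1) ∧
      (∀ t ∈ Ioc (0 : ℝ) (1 / 4), -deriv G t ≤ 1 / t) := by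
  have hG : ∀ t ∈ Ioi (0 : ℝ), HasDerivAt (fun t => -log (cubicProfile t))
      (-(3 * (1 - t)⁺ ^ 2 / cubicProfile t)) t := fun t ht =>
    ((hasDerivAt_cubicProfile t).log (cubicProfile_pos ht).ne').neg
  have hG' : ∀ t ∈ Ioi (0 : ℝ), deriv (fun t => -log (cubicProfile t)) t ≤ 0 := fun t ht => by
    rw [(hG t ht).deriv, neg_nonpos]
    exact div_nonneg (by positivity) (cubicProfile_pos ht).le
  refine ⟨fun t => -log (cubicProfile t), ?_, fun t ht => ?_, ?_, hG', fun t ht => ?_,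
    fun t ht => ?_, tendsto_neg_log_cubicProfile_div_neg_log, fun t ht => ?_⟩
  · exact (contDiffOn_log.comp contDiff_cubicProfile.contDiffOn
      fun t ht => (cubicProfile_pos ht).ne').neg
  · exact neg_nonneg.2 (log_nonpos (cubicProfile_pos ht).le (cubicProfile_le_one t))
  · refine antitoneOn_of_deriv_nonpos (convex_Ioi 0)
      (fun t ht => (hG t ht).continuousAt.continuousWithinAt)
      (fun t ht => (hG t (interior_subset ht)).differentiableAt.differentiableWithinAt) ?_
    simpa only [interior_Ioi] using hG'
  · exact sq_deriv_neg_log_le_deriv_deriv isOpen_Ioi (fun x _ => hasDerivAt_cubicProfile x)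
      (fun x hx => cubicProfile_pos hx) ht (hasDerivAt_cubicProfile_deriv t)
      (neg_nonpos.2 (by positivity))
  · simp [cubicProfile_of_one_le ht.le]
  · rw [(hG t ht.1).deriv, neg_neg]
    exact three_mul_sq_div_cubicProfile_le ht.1
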